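/- arXiv:2512.06967 — 2 statements merged into one kernel-verified Lean document; each statement's English description precedes it below -/
import Mathlib

section
/- Let T = S_k + u ⊗ v on a Hilbert space, with u, v nonzero. If T is quasinormal and not an isometry, then ker(I - T*T) is a nonzero, proper, closed subspace invariant under S_k. -/
open ContinuousLinearMap

noncomputable def rankOne {H : Type*} [NormedAddCommGroup H] [InnerProductSpace ℂ H]
    [CompleteSpace H] (u v : H) : H →L[ℂ] H :=
  (innerSL ℂ v).smulRight u

section helpers

variable {H : Type*} [NormedAddCommGroup H] [InnerProductSpace ℂ H] [CompleteSpace H]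

lemma hb_ext_vec (e : HilbertBasis ℕ ℂ H) {x y : H}
    (h : ∀ i, (inner ℂ (e i) x : ℂ) = inner ℂ (e i) y) : x = y := by
  apply e.repr.injective
  ext i
  rw [e.repr_apply_apply, e.repr_apply_apply]
  exact h i

lemma clm_ext_basis (e : HilbertBasis ℕ ℂ H) {f g : H →L[ℂ] H}
    (h : ∀ i, f (e i) = g (e i)) : f = g :=
  ContinuousLinearMap.ext_on
    (Submodule.dense_iff_topologicalClosure_eq_top.mpr e.dense_span)
    (by rintro _ ⟨i, rfl⟩; exact h i)

lemma rankOne_apply' (u v x : H) : rankOne u v x = (inner ℂ v x : ℂ) • u := rfl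

lemma adjoint_rankOne (u v : H) :
    ContinuousLinearMap.adjoint (rankOne u v) = rankOne v u := by
  symm
  rw [ContinuousLinearMap.eq_adjoint_iff]
  intro x y
  simp only [rankOne_apply', inner_smul_left, inner_smul_right]
  rw [← inner_conj_symm x u]
  ring

end helpers

/-- If `T = S_k + u ⊗ v` is quasinormal and not an isometry, then `ker(I - T*T)` is
a nonzero proper closed subspace invariant under `S_k`. -/
theorem stmt_11 {H : Type*} [NormedAddCommGroup H] [InnerProductSpace ℂ H]
    [CompleteSpace H]
    (e : HilbertBasis ℕ ℂ H) (k : ℕ) (hk : 1 ≤ k)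
    (S : H →L[ℂ] H) (hS : ∀ n, S (e n) = e (n + k))
    (u v : H) (hu : u ≠ 0) (hv : v ≠ 0)
    (T : H →L[ℂ] H) (hT : T = S + rankOne u v)
    (hq : T ∘L (ContinuousLinearMap.adjoint T ∘L T) = (ContinuousLinearMap.adjoint T ∘L T) ∘L T)
    (hni : ContinuousLinearMap.adjoint T ∘L T ≠ 1) :
    LinearMap.ker (((1 : H →L[ℂ] H) - ContinuousLinearMap.adjoint T ∘L T) : H →ₗ[ℂ] H) ≠ ⊥ ∧
    LinearMap.ker (((1 : H →L[ℂ] H) - ContinuousLinearMap.adjoint T ∘L T) : H →ₗ[ℂ] H) ≠ ⊤ ∧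
    IsClosed ((LinearMap.ker (((1 : H →L[ℂ] H) - ContinuousLinearMap.adjoint T ∘L T) :
      H →ₗ[ℂ] H) : Submodule ℂ H) : Set H) ∧
    ∀ x ∈ LinearMap.ker (((1 : H →L[ℂ] H) - ContinuousLinearMap.adjoint T ∘L T) : H →ₗ[ℂ] H),
      S x ∈ LinearMap.ker (((1 : H →L[ℂ] H) - ContinuousLinearMap.adjoint T ∘L T) :
        H →ₗ[ℂ] H) := by
  classical
  have horth := orthonormal_iff_ite.mp e.orthonormal
  set A : H →L[ℂ] H := (1 : H →L[ℂ] H) - ContinuousLinearMap.adjoint T ∘L T with hAdef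
  -- S is an isometry: S* S = 1
  have hSS : ContinuousLinearMap.adjoint S ∘L S = 1 := by
    apply clm_ext_basis e
    intro n
    rw [ContinuousLinearMap.comp_apply, ContinuousLinearMap.one_apply, hS]
    apply hb_ext_vec e
    intro j
    rw [ContinuousLinearMap.adjoint_inner_right, hS, horth, horth]
    simp [Nat.add_right_cancel_iff]
  have hTadj : ContinuousLinearMap.adjoint T = ContinuousLinearMap.adjoint S + rankOne v u := by
    rw [hT, map_add, adjoint_rankOne]
  have hTapp : ∀ x, T x = S x + (inner ℂ v x : ℂ) • u := by
    intro x; rw [hT]; rfl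
  set a : H := ContinuousLinearMap.adjoint S u with ha_def
  -- the formula for A
  have hA : ∀ x : H, A x =
      -((inner ℂ v x : ℂ) • a + ((inner ℂ a x : ℂ) + (‖u‖ : ℂ)^2 * (inner ℂ v x : ℂ)) • v) := by
    intro x
    have h2 : ContinuousLinearMap.adjoint S (S x) = x := by
      have := congrArg (fun f : H →L[ℂ] H => f x) hSS
      simpa using this
    have h3 : (inner ℂ u (S x) : ℂ) = inner ℂ a x := by
      rw [ha_def, ContinuousLinearMap.adjoint_inner_left]
    have h4 : (inner ℂ u u : ℂ) = (‖u‖ : ℂ)^2 := inner_self_eq_norm_sq_to_K u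
    have h1 : A x = x - ContinuousLinearMap.adjoint T (T x) := by
      simp [hAdef]
    rw [h1, hTapp, hTadj]
    simp only [ContinuousLinearMap.add_apply, map_add, map_smul, rankOne_apply',
      inner_add_right, inner_smul_right, h2, h3, h4]
    rw [ha_def]
    module
  -- every kernel element is orthogonal to v
  have hker_v : ∀ x : H, A x = 0 → (inner ℂ v x : ℂ) = 0 := by
    intro x hx
    by_contra hc
    set c : ℂ := inner ℂ v x with hc_def
    set β : ℂ := (inner ℂ a x : ℂ) + (‖u‖ : ℂ)^2 * c with hβ_def
    have h0 : c • a + β • v = 0 := by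
      have := (hA x).symm.trans hx
      rwa [neg_eq_zero] at this
    set lam : ℂ := -β / c with hlam_def
    have ha : a = lam • v := by
      have h5 : c • a = -(β • v) := eq_neg_of_add_eq_zero_left h0
      calc a = c⁻¹ • (c • a) := by rw [smul_smul, inv_mul_cancel₀ hc, one_smul]
        _ = lam • v := by
            rw [h5, smul_neg, smul_smul, ← neg_smul]
            congr 1
            rw [hlam_def]
            field_simp
    set μ : ℂ := lam + (starRingEnd ℂ) lam + (‖u‖ : ℂ)^2 with hμ_def
    have hAy : ∀ y : H, A y = -(μ * (inner ℂ v y : ℂ)) • v := by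
      intro y
      rw [hA y, ha, inner_smul_left, smul_smul]
      rw [← add_smul, ← neg_smul, hμ_def]
      congr 1
      ring
    have hμ0 : μ = 0 := by
      have h6 : -(μ * c) • v = 0 := by rw [← hAy x, hx]
      rcases smul_eq_zero.mp h6 with h7 | h7
      · have : μ * c = 0 := by rwa [neg_eq_zero] at h7
        exact (mul_eq_zero.mp this).resolve_right hc
      · exact absurd h7 hv
    have hA0 : A = 0 := by
      ext y
      rw [hAy y, hμ0]
      simp
    apply hni
    have : (1 : H →L[ℂ] H) - ContinuousLinearMap.adjoint T ∘L T = 0 := hA0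
    have := sub_eq_zero.mp this
    exact this.symm
  have hmem : ∀ x : H, x ∈ LinearMap.ker
      (((1 : H →L[ℂ] H) - ContinuousLinearMap.adjoint T ∘L T) : H →ₗ[ℂ] H) ↔ A x = 0 := by
    intro x
    rw [LinearMap.mem_ker]
    rfl
  refine ⟨?_, ?_, ?_, ?_⟩
  · -- nonzero
    set K : Submodule ℂ H := Submodule.span ℂ ({v, a} : Set H) with hK
    haveI : FiniteDimensional ℂ K := FiniteDimensional.span_of_finite ℂ (Set.toFinite _)
    have hKorth : Kᗮ ≠ ⊥ := by
      intro hbot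
      have hKtop : K = ⊤ := Submodule.orthogonal_eq_bot_iff.mp hbot
      haveI : FiniteDimensional ℂ H := by
        rw [hKtop] at this
        exact Module.Finite.equiv (Submodule.topEquiv (R := ℂ) (M := H))
      exact Module.Finite.not_linearIndependent_of_infinite e
        e.orthonormal.linearIndependent
    obtain ⟨x, hxK, hx0⟩ := Submodule.exists_mem_ne_zero_of_ne_bot hKorth
    have hvx : (inner ℂ v x : ℂ) = 0 :=
      hxK v (Submodule.subset_span (by simp))
    have hax : (inner ℂ a x : ℂ) = 0 :=
      hxK a (Submodule.subset_span (by simp))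
    rw [Submodule.ne_bot_iff]
    refine ⟨x, (hmem x).mpr ?_, hx0⟩
    rw [hA x, hvx, hax]
    simp
  · -- proper
    intro htop
    apply hni
    have hA0 : A = 0 := by
      ext y
      have : A y = 0 := (hmem y).mp (htop ▸ Submodule.mem_top)
      simpa using this
    have : (1 : H →L[ℂ] H) - ContinuousLinearMap.adjoint T ∘L T = 0 := hA0
    exact (sub_eq_zero.mp this).symm
  · -- closed
    exact ContinuousLinearMap.isClosed_ker A
  · -- invariant
    intro x hx
    have hAx : A x = 0 := (hmem x).mp hx
    have hvx : (inner ℂ v x : ℂ) = 0 := hker_v x hAx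
    have hTx : T x = S x := by rw [hTapp, hvx]; simp
    have hcomm : A (T x) = T (A x) := by
      have hq' := congrArg (fun f : H →L[ℂ] H => f x) hq
      simp only [ContinuousLinearMap.comp_apply] at hq'
      simp [hAdef, map_sub, hq']
    rw [hmem, ← hTx, hcomm, hAx, map_zero]
end

section
/- Let u, v be nonzero vectors in a Hilbert space H and S_k a unilateral shift of multiplicity k. If v and S_k*u are linearly independent, then T = S_k + u ⊗ v is not an isometry. -/
open ContinuousLinearMap

open scoped InnerProductSpace

private lemma basis_ext {H : Type*} [NormedAddCommGroup H] [InnerProductSpace ℂ H]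
    [CompleteSpace H] (e : HilbertBasis ℕ ℂ H) {x y : H}
    (h : ∀ n, ⟪e n, x⟫_ℂ = ⟪e n, y⟫_ℂ) : x = y := by
  apply e.repr.injective
  apply lp.ext
  funext n
  simpa [HilbertBasis.repr_apply_apply] using h n

private lemma shift_isometry {H : Type*} [NormedAddCommGroup H] [InnerProductSpace ℂ H]
    [CompleteSpace H] (e : HilbertBasis ℕ ℂ H) (k : ℕ)
    (S : H →L[ℂ] H) (hS : ∀ n, S (e n) = e (n + k)) (f g : H) :
    ⟪S f, S g⟫_ℂ = ⟪f, g⟫_ℂ := by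
  classical
  have hie := orthonormal_iff_ite.mp e.orthonormal
  have hadj : ∀ m, ContinuousLinearMap.adjoint S (e m) =
      if h : k ≤ m then e (m - k) else 0 := by
    intro m
    apply basis_ext e
    intro n
    rw [ContinuousLinearMap.adjoint_inner_right, hS]
    by_cases h : k ≤ m
    · rw [dif_pos h, hie, hie]
      by_cases hnm : n + k = m
      · have : n = m - k := by omega
        simp only [hnm, this, if_true, if_pos rfl]
        rw [if_pos (by omega)]
      · have : n ≠ m - k := by omega
        simp [hnm, this]
    · rw [dif_neg h, inner_zero_right, hie]
      have : n + k ≠ m := by omega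
      simp [this]
  have h1 : HasSum (fun m => ⟪S f, e m⟫_ℂ * ⟪e m, S g⟫_ℂ) ⟪S f, S g⟫_ℂ :=
    e.hasSum_inner_mul_inner _ _
  have h0 : HasSum (fun n => ⟪f, e n⟫_ℂ * ⟪e n, g⟫_ℂ) ⟪f, g⟫_ℂ :=
    e.hasSum_inner_mul_inner f g
  have hF : ∀ m, ⟪S f, e m⟫_ℂ * ⟪e m, S g⟫_ℂ =
      ⟪f, ContinuousLinearMap.adjoint S (e m)⟫_ℂ *
      ⟪ContinuousLinearMap.adjoint S (e m), g⟫_ℂ := by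
    intro m
    rw [ContinuousLinearMap.adjoint_inner_left]
    congr 1
    rw [← inner_conj_symm, ContinuousLinearMap.adjoint_inner_right, inner_conj_symm]
  have hinj : Function.Injective (fun n : ℕ => n + k) := fun a b hab => by
    simpa using hab
  have key : HasSum (fun m => ⟪S f, e m⟫_ℂ * ⟪e m, S g⟫_ℂ) ⟪f, g⟫_ℂ := by
    rw [← hinj.hasSum_iff ?_]
    · convert h0 using 1
      funext n
      have hk : k ≤ n + k := Nat.le_add_left _ _
      simp only [Function.comp_apply, hF, hadj, dif_pos hk, Nat.add_sub_cancel]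
    · intro m hm
      have hmk : ¬ k ≤ m := by
        intro hle
        exact hm ⟨m - k, by simp only []; omega⟩
      rw [hF, hadj, dif_neg hmk]
      simp
  exact h1.unique key

/-- If `v` and `S_k*u` are linearly independent, then `T = S_k + u ⊗ v` is not an isometry. -/
theorem stmt_14 {H : Type*} [NormedAddCommGroup H] [InnerProductSpace ℂ H]
    [CompleteSpace H]
    (e : HilbertBasis ℕ ℂ H) (k : ℕ) (hk : 1 ≤ k)
    (S : H →L[ℂ] H) (hS : ∀ n, S (e n) = e (n + k))
    (u v : H) (hu : u ≠ 0) (hv : v ≠ 0)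
    (hind : LinearIndependent ℂ ![v, ContinuousLinearMap.adjoint S u])
    (T : H →L[ℂ] H) (hT : T = S + rankOne u v) :
    ContinuousLinearMap.adjoint T ∘L T ≠ 1 := by
  intro h
  have hiso := shift_isometry e k S hS
  have key : ∀ f g : H, ⟪T f, T g⟫_ℂ = ⟪f, g⟫_ℂ := by
    intro f g
    have h1 : ContinuousLinearMap.adjoint T (T f) = f := by
      have := congrArg (fun A => A f) h
      simpa using this
    rw [← ContinuousLinearMap.adjoint_inner_left, h1]
  have hTapp : ∀ f, T f = S f + ⟪v, f⟫_ℂ • u := by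
    intro f
    simp [hT, rankOne]
  set w := ContinuousLinearMap.adjoint S u with hwdef
  have hvec : (starRingEnd ℂ (⟪S v, u⟫_ℂ) + ⟪v, v⟫_ℂ * ⟪u, u⟫_ℂ) • v + ⟪v, v⟫_ℂ • w = 0 := by
    apply ext_inner_right ℂ
    intro g
    rw [inner_zero_left, inner_add_left, inner_smul_left, inner_smul_left]
    have hk2 := key v g
    rw [hTapp, hTapp] at hk2
    simp only [inner_add_left, inner_add_right, inner_smul_left, inner_smul_right,
      hiso v g] at hk2
    have hw : ⟪u, S g⟫_ℂ = ⟪w, g⟫_ℂ := by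
      rw [hwdef]; exact (ContinuousLinearMap.adjoint_inner_left S g u).symm
    rw [hw, inner_conj_symm] at hk2
    simp only [map_add, map_mul, RingHomCompTriple.comp_apply, RingHom.id_apply,
      inner_conj_symm, starRingEnd_self_apply, star_star]
    linear_combination hk2
  have := (LinearIndependent.pair_iff.mp hind) _ _ hvec
  exact hv (inner_self_eq_zero.mp this.2)
end
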